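/- For every ε ∈ {1,−1} and every ν ∈ ℝ (including ν ∈ ℤ_{−ε}), the deformed module Π(ε,ν) admits an invariant Hermitian form ⟨·,·⟩ satisfying ⟨v_i, v_j⟩ = 0 for all i ≠ j in ℤ_ε and ⟨v_j, v_j⟩ ∈ {1, −1} for all j ∈ ℤ_ε; in particular this form is nondegenerate. -/

import Mathlib

namespace SL2Deform

/-- The index set `ℤ_ε = {j : ℤ | (-1)^j = ε}`, for a sign `ε ∈ {1, -1}`
(i.e. a unit of `ℤ`). -/
abbrev idx (ε : ℤˣ) : Type := {j : ℤ // (-1 : ℤˣ) ^ j = ε}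

/-- `V ε`: the complex vector space of finitely supported functions on `ℤ_ε`,
with standard basis `{v_j}`. -/
abbrev V (ε : ℤˣ) : Type := idx ε →₀ ℂ

/-- The standard basis vector `v_j` of `V ε`, for `j ∈ ℤ_ε`. -/
noncomputable def bv (ε : ℤˣ) (j : ℤ) (h : (-1 : ℤˣ) ^ j = ε) : V ε :=
  Finsupp.single ⟨j, h⟩ 1

lemma parity_two : (-1 : ℤˣ) ^ (2 : ℤ) = 1 := by decide
lemma parity_neg_two : (-1 : ℤˣ) ^ (-2 : ℤ) = 1 := by decide
lemma parity_zero : (-1 : ℤˣ) ^ (0 : ℤ) = 1 := by decide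

lemma parity_shift {ε : ℤˣ} {j : ℤ} (h : (-1 : ℤˣ) ^ j = ε) {s : ℤ}
    (hs : (-1 : ℤˣ) ^ s = 1) : (-1 : ℤˣ) ^ (j + s) = ε := by
  rw [zpow_add, h, hs, mul_one]

/-- If `m ∈ ℤ_{-ε}` then `m + 1 ∈ ℤ_ε`. -/
lemma parity_succ {ε : ℤˣ} {m : ℤ} (h : (-1 : ℤˣ) ^ m = -ε) :
    (-1 : ℤˣ) ^ (m + 1) = ε := by
  rw [zpow_add, h, zpow_one]
  simp

/-- If `m ∈ ℤ_{-ε}` then `m - 1 ∈ ℤ_ε`. -/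
lemma parity_pred {ε : ℤˣ} {m : ℤ} (h : (-1 : ℤˣ) ^ m = -ε) :
    (-1 : ℤˣ) ^ (m - 1) = ε := by
  rw [sub_eq_add_neg, zpow_add, h, zpow_neg, zpow_one]
  simp

/-- The linear operator on `V ε` sending `v_j` to `c j • v_{j+s}`,
for an even shift `s`. -/
noncomputable def shiftOp (ε : ℤˣ) (s : ℤ) (hs : (-1 : ℤˣ) ^ s = 1) (c : ℤ → ℂ) :
    V ε →ₗ[ℂ] V ε :=
  Finsupp.lsum ℂ fun j =>
    LinearMap.toSpanSingleton ℂ (V ε)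
      (Finsupp.single ⟨j.1 + s, parity_shift j.2 hs⟩ (c j.1))

/-- `H v_j = j • v_j`. -/
noncomputable def Hop (ε : ℤˣ) : V ε →ₗ[ℂ] V ε :=
  shiftOp ε 0 parity_zero fun j => (j : ℂ)

/-- Principal series: `E v_j = ½(ν + j + 1) • v_{j+2}`. -/
noncomputable def Eop (ε : ℤˣ) (ν : ℂ) : V ε →ₗ[ℂ] V ε :=
  shiftOp ε 2 parity_two fun j => (1 / 2 : ℂ) * (ν + j + 1)

/-- Principal series: `F v_j = ½(ν - j + 1) • v_{j-2}`. -/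
noncomputable def Fop (ε : ℤˣ) (ν : ℂ) : V ε →ₗ[ℂ] V ε :=
  shiftOp ε (-2) parity_neg_two fun j => (1 / 2 : ℂ) * (ν - j + 1)

/-- `f_m(ν) = ½ |ν²-m²|^{1/2} (ν+m)/|ν+m|` for `ν ≠ -m`, and `f_m(-m) = 0`. -/
noncomputable def fm (m : ℤ) (ν : ℂ) : ℂ :=
  if ν = -(m : ℂ) then 0
  else (1 / 2 : ℂ) * (Real.sqrt (‖ν ^ 2 - (m : ℂ) ^ 2‖) : ℝ) * (ν + m) /
    (‖ν + (m : ℂ)‖ : ℝ)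

/-- Deformed module: `E v_{m-1} = f_m(ν) • v_{m+1}`, i.e. `E v_j = f_{j+1}(ν) • v_{j+2}`. -/
noncomputable def PEop (ε : ℤˣ) (ν : ℂ) : V ε →ₗ[ℂ] V ε :=
  shiftOp ε 2 parity_two fun j => fm (j + 1) ν

/-- Deformed module: `F v_{m+1} = f_{-m}(ν) • v_{m-1}`, i.e. `F v_j = f_{-(j-1)}(ν) • v_{j-2}`. -/
noncomputable def PFop (ε : ℤˣ) (ν : ℂ) : V ε →ₗ[ℂ] V ε :=
  shiftOp ε (-2) parity_neg_two fun j => fm (1 - j) ν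

/-- The module `π'(ε,ν)`: `E v_{m-1} = ½(ν - |m|) • v_{m+1}`,
i.e. `E v_j = ½(ν - |j+1|) • v_{j+2}`. -/
noncomputable def E'op (ε : ℤˣ) (ν : ℂ) : V ε →ₗ[ℂ] V ε :=
  shiftOp ε 2 parity_two fun j => (1 / 2 : ℂ) * (ν - ((|j + 1| : ℤ) : ℂ))

/-- The module `π'(ε,ν)`: `F v_{m+1} = ½(ν + |m|) • v_{m-1}`,
i.e. `F v_j = ½(ν + |j-1|) • v_{j-2}`. -/
noncomputable def F'op (ε : ℤˣ) (ν : ℂ) : V ε →ₗ[ℂ] V ε :=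
  shiftOp ε (-2) parity_neg_two fun j => (1 / 2 : ℂ) * (ν + ((|j - 1| : ℤ) : ℂ))

/-- `ν ∈ ℤ_{-ε}`: `ν` is an integer with `(-1)^ν = -ε`. -/
def inZminus (ε : ℤˣ) (ν : ℂ) : Prop :=
  ∃ n : ℤ, ν = (n : ℂ) ∧ (-1 : ℤˣ) ^ n = -ε

section ModuleNotions

variable {M : Type*} [AddCommGroup M] [Module ℂ M]
variable {N : Type*} [AddCommGroup N] [Module ℂ N]

/-- `W` is a submodule for the module with operators `A, B, C`: it is invariant
under all three operators. -/
def Invariant (A B C : M →ₗ[ℂ] M) (W : Submodule ℂ M) : Prop :=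
  (∀ x ∈ W, A x ∈ W) ∧ (∀ x ∈ W, B x ∈ W) ∧ (∀ x ∈ W, C x ∈ W)

/-- The module with operators `A, B, C` is irreducible: its only submodules are
`0` and the whole space. -/
def IsIrreducibleRep (A B C : M →ₗ[ℂ] M) : Prop :=
  ∀ W : Submodule ℂ M, Invariant A B C W → W = ⊥ ∨ W = ⊤

/-- `W` is an irreducible submodule: invariant, nonzero, and with no nonzero
proper invariant subspace. -/
def IsIrreducibleSubmodule (A B C : M →ₗ[ℂ] M) (W : Submodule ℂ M) : Prop :=
  Invariant A B C W ∧ W ≠ ⊥ ∧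
    ∀ U : Submodule ℂ M, Invariant A B C U → U ≤ W → U = ⊥ ∨ U = W

/-- The module with operators `A, B, C` is completely reducible: every invariant
subspace has an invariant complement. -/
def CompletelyReducible (A B C : M →ₗ[ℂ] M) : Prop :=
  ∀ W : Submodule ℂ M, Invariant A B C W →
    ∃ U : Submodule ℂ M, Invariant A B C U ∧ IsCompl W U

/-- The two modules (given by operator triples) are isomorphic. -/
def Intertwined (A B C : M →ₗ[ℂ] M) (A' B' C' : N →ₗ[ℂ] N) : Prop :=
  ∃ e : M ≃ₗ[ℂ] N, (∀ x, e (A x) = A' (e x)) ∧ (∀ x, e (B x) = B' (e x)) ∧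
    (∀ x, e (C x) = C' (e x))

/-- An invariant Hermitian form for the module with operators `A, B, C`
(`A` playing the role of `H`, `B` of `E`, `C` of `F`): a sesquilinear form,
conjugate-symmetric, with `⟨Hv,w⟩ = ⟨v,Hw⟩`, `⟨Ev,w⟩ + ⟨v,Fw⟩ = 0`,
`⟨Fv,w⟩ + ⟨v,Ew⟩ = 0`. -/
structure IsInvHermForm (A B C : M →ₗ[ℂ] M) (Φ : M → M → ℂ) : Prop where
  add_left : ∀ u v w, Φ (u + v) w = Φ u w + Φ v w
  smul_left : ∀ (a : ℂ) (v w : M), Φ (a • v) w = a * Φ v w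
  conj_symm : ∀ v w, Φ w v = (starRingEnd ℂ) (Φ v w)
  inv_A : ∀ v w, Φ (A v) w = Φ v (A w)
  inv_BC : ∀ v w, Φ (B v) w + Φ v (C w) = 0
  inv_CB : ∀ v w, Φ (C v) w + Φ v (B w) = 0

end ModuleNotions

/-- `span{v_j : j ≥ n}`. -/
noncomputable def spanGE (ε : ℤˣ) (n : ℤ) : Submodule ℂ (V ε) :=
  Submodule.span ℂ {x : V ε | ∃ j : idx ε, n ≤ j.1 ∧ x = Finsupp.single j 1}

/-- `span{v_j : j ≤ n}`. -/
noncomputable def spanLE (ε : ℤˣ) (n : ℤ) : Submodule ℂ (V ε) :=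
  Submodule.span ℂ {x : V ε | ∃ j : idx ε, j.1 ≤ n ∧ x = Finsupp.single j 1}

/-- `span{v_j : |j| ≤ n}`. -/
noncomputable def spanAbsLE (ε : ℤˣ) (n : ℤ) : Submodule ℂ (V ε) :=
  Submodule.span ℂ {x : V ε | ∃ j : idx ε, |j.1| ≤ n ∧ x = Finsupp.single j 1}

/-- The diagonal operator `S v_j = c j • v_j`. -/
noncomputable def diagMap (ε : ℤˣ) (c : idx ε → ℂ) : V ε →ₗ[ℂ] V ε :=
  Finsupp.lsum ℂ fun j => LinearMap.toSpanSingleton ℂ (V ε) (Finsupp.single j (c j))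

/-! For real `ν` the coefficients `f_m(ν)` are real and `f_{-m}(ν) = sgn(ν² - m²) f_m(ν)`.
Hence the diagonal form `⟨v, w⟩ = ∑ d_j v_j conj(w_j)` is invariant as soon as
`d_{m+1} = -sgn(ν² - m²) d_{m-1}` whenever `m² ≠ ν²`, and a sign sequence `d : ℤ → {±1}` with this
property is obtained by solving the two-step recursion outwards from `d_0 = d_1 = 1`. -/

section StepTwo

variable {G : Type*} [Group G]

noncomputable def stepTwoSeq (r : ℤ → G) (j : ℤ) : G :=
  if 2 ≤ j then r (j - 1) * stepTwoSeq r (j - 2)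
  else if j < 0 then (r (j + 1))⁻¹ * stepTwoSeq r (j + 2)
  else 1
termination_by (2 * j - 1).natAbs

theorem stepTwoSeq_add_two (r : ℤ → G) (j : ℤ) :
    stepTwoSeq r (j + 2) = r (j + 1) * stepTwoSeq r j := by
  by_cases hj : 0 ≤ j
  · rw [stepTwoSeq, if_pos (by omega), add_sub_cancel_right, add_sub_assoc]
    norm_num
  · conv_rhs => rw [stepTwoSeq, if_neg (by omega), if_pos (by omega)]
    rw [mul_inv_cancel_left]

end StepTwo

theorem sqrt_abs_mul_mul_div_abs_swap (a b : ℝ) :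
    √|a * b| * (b / |b|) = (if 0 < a * b then 1 else -1) * (√|a * b| * (a / |a|)) := by
  rcases eq_or_ne (a * b) 0 with hab | hab
  · simp [hab]
  obtain ⟨ha, hb⟩ := mul_ne_zero_iff.mp hab
  rcases ha.lt_or_gt with ha | ha <;> rcases hb.lt_or_gt with hb | hb <;>
    simp [abs_of_neg, abs_of_pos, ha, hb, mul_pos_of_neg_of_neg, mul_neg_of_pos_of_neg,
      mul_neg_of_neg_of_pos, ha.ne, hb.ne, ha.ne', hb.ne', not_lt_of_gt]

section DiagForm

variable {ι : Type*}

noncomputable def diagForm (d : ι → ℂ) : (ι →₀ ℂ) →ₗ[ℂ] (ι →₀ ℂ) →ₗ⋆[ℂ] ℂ :=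
  Finsupp.lsum ℂ fun i => LinearMap.toSpanSingleton ℂ _
    (d i • (starLinearEquiv ℂ (A := ℂ)).toLinearMap.comp (Finsupp.lapply i))

theorem diagForm_apply (d : ι → ℂ) (v w : ι →₀ ℂ) :
    diagForm d v w = v.sum fun i a => d i * a * starRingEnd ℂ (w i) := by
  rw [diagForm, Finsupp.lsum_apply, Finsupp.sum, LinearMap.sum_apply]
  refine Finset.sum_congr rfl fun i _ => ?_
  simp only [LinearMap.toSpanSingleton_apply, LinearMap.smul_apply, LinearMap.coe_comp,
    LinearEquiv.coe_coe, Function.comp_apply, Finsupp.lapply_apply, starLinearEquiv_apply,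
    RCLike.star_def, smul_eq_mul]
  ring

theorem diagForm_single (d : ι → ℂ) (i : ι) (a : ℂ) (w : ι →₀ ℂ) :
    diagForm d (Finsupp.single i a) w = d i * a * starRingEnd ℂ (w i) := by
  rw [diagForm_apply, Finsupp.sum_single_index (by simp)]

theorem diagForm_single_right (d : ι → ℂ) (v : ι →₀ ℂ) (i : ι) (b : ℂ) :
    diagForm d v (Finsupp.single i b) = d i * v i * starRingEnd ℂ b := by
  rw [diagForm_apply, Finsupp.sum_eq_single i (fun j _ hji => by simp [hji]) (by simp)]
  simp

theorem diagForm_conj_symm {d : ι → ℂ} (hd : ∀ i, starRingEnd ℂ (d i) = d i)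
    (v w : ι →₀ ℂ) : diagForm d w v = starRingEnd ℂ (diagForm d v w) := by
  classical
  have hsum : ∀ u u' : ι →₀ ℂ, u.support ⊆ v.support ∪ w.support →
      diagForm d u u' = ∑ i ∈ v.support ∪ w.support, d i * u i * starRingEnd ℂ (u' i) :=
    fun u u' hu => by rw [diagForm_apply]; exact Finsupp.sum_of_support_subset u hu _ (by simp)
  rw [hsum w v Finset.subset_union_right, hsum v w Finset.subset_union_left, map_sum]
  refine Finset.sum_congr rfl fun i _ => ?_
  simp only [map_mul, hd, Complex.conj_conj]
  ring

theorem eq_zero_of_diagForm_eq_zero {d : ι → ℂ} (hd : ∀ i, d i ≠ 0) {v : ι →₀ ℂ}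
    (hv : ∀ w, diagForm d v w = 0) : v = 0 := by
  ext i
  simpa [diagForm_single_right, hd i] using hv (Finsupp.single i 1)

end DiagForm

theorem shiftOp_single (ε : ℤˣ) (s : ℤ) (hs : (-1 : ℤˣ) ^ s = 1) (c : ℤ → ℂ) (j : idx ε)
    (a : ℂ) :
    shiftOp ε s hs c (Finsupp.single j a)
      = Finsupp.single ⟨j.1 + s, parity_shift j.2 hs⟩ (a * c j.1) := by
  rw [shiftOp, Finsupp.lsum_single, LinearMap.toSpanSingleton_apply, Finsupp.smul_single,
    smul_eq_mul]

theorem diagForm_shiftOp {ε : ℤˣ} (d : ℤ → ℂ) {s s' : ℤ} (hs : (-1 : ℤˣ) ^ s = 1)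
    (hs' : (-1 : ℤˣ) ^ s' = 1) (hss' : s' = -s) (c c' : ℤ → ℂ) (ζ : ℂ)
    (h : ∀ j : idx ε, d (j + s) * c j = ζ * (d j * starRingEnd ℂ (c' (j + s))))
    (v w : V ε) :
    diagForm (fun j : idx ε => d j) (shiftOp ε s hs c v) w
      = ζ * diagForm (fun j : idx ε => d j) v (shiftOp ε s' hs' c' w) := by
  have hmap : (diagForm fun j : idx ε => d j).comp (shiftOp ε s hs c)
      = ζ • (diagForm fun j : idx ε => d j).compl₂ (shiftOp ε s' hs' c') := by
    refine LinearMap.ext_basis Finsupp.basisSingleOne Finsupp.basisSingleOne fun i k => ?_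
    simp only [LinearMap.comp_apply, LinearMap.compl₂_apply, LinearMap.smul_apply,
      Finsupp.coe_basisSingleOne, shiftOp_single, diagForm_single, Finsupp.single_apply,
      Subtype.ext_iff, smul_eq_mul]
    by_cases hk : k.1 = i.1 + s
    · rw [if_pos hk, if_pos (by omega), hk]
      simpa using h i
    · rw [if_neg hk, if_neg (by omega)]
      simp
  exact LinearMap.congr_fun₂ hmap v w

-- The case `ν = -m` in the definition of `fm` is absorbed by `0 / |0| = 0`.
theorem fm_ofReal (m : ℤ) (ν : ℝ) :
    fm m ν = ((1 / 2 * √|(ν + m) * (ν - m)| * ((ν + m) / |ν + m|) : ℝ) : ℂ) := by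
  rw [fm]
  split_ifs with h
  · have : ν + m = 0 := by exact_mod_cast (by linear_combination h : (ν : ℂ) + m = 0)
    simp [this]
  · have hsq : (ν : ℂ) ^ 2 - (m : ℂ) ^ 2 = (((ν + m) * (ν - m) : ℝ) : ℂ) := by push_cast; ring
    have hadd : (ν : ℂ) + m = ((ν + m : ℝ) : ℂ) := by push_cast; ring
    rw [hsq, hadd, Complex.norm_real, Complex.norm_real, Real.norm_eq_abs, Real.norm_eq_abs]
    push_cast
    ring

theorem conj_fm_ofReal (m : ℤ) (ν : ℝ) : starRingEnd ℂ (fm m ν) = fm m ν := by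
  rw [fm_ofReal, Complex.conj_ofReal]

theorem fm_neg_ofReal (m : ℤ) (ν : ℝ) :
    fm (-m) ν = (if (m : ℝ) ^ 2 < ν ^ 2 then 1 else -1) * fm m ν := by
  have hswap := sqrt_abs_mul_mul_div_abs_swap (ν + m) (ν - m)
  have hpos : 0 < (ν + m) * (ν - m) ↔ (m : ℝ) ^ 2 < ν ^ 2 := by
    rw [← sub_pos (a := ν ^ 2), sq_sub_sq]
  rw [fm_ofReal, fm_ofReal, Int.cast_neg, sub_neg_eq_add, ← sub_eq_add_neg, mul_comm (ν - m)]
  split_ifs with h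
  · rw [if_pos (hpos.mpr h)] at hswap
    rw [one_mul, Complex.ofReal_inj]
    linear_combination hswap / 2
  · rw [if_neg (mt hpos.mp h)] at hswap
    rw [neg_one_mul, ← Complex.ofReal_neg, Complex.ofReal_inj]
    linear_combination hswap / 2

noncomputable def signFlip (ν : ℝ) (m : ℤ) : ℤˣ := if (m : ℝ) ^ 2 < ν ^ 2 then -1 else 1

noncomputable def hermWeight (ν : ℝ) (j : ℤ) : ℂ := ((stepTwoSeq (signFlip ν) j : ℤˣ) : ℤ)

theorem hermWeight_eq_one_or (ν : ℝ) (j : ℤ) : hermWeight ν j = 1 ∨ hermWeight ν j = -1 := by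
  rcases Int.units_eq_one_or (stepTwoSeq (signFlip ν) j) with h | h <;> simp [hermWeight, h]

theorem conj_hermWeight (ν : ℝ) (j : ℤ) : starRingEnd ℂ (hermWeight ν j) = hermWeight ν j := by
  rcases hermWeight_eq_one_or ν j with h | h <;> simp [h]

theorem hermWeight_ne_zero (ν : ℝ) (j : ℤ) : hermWeight ν j ≠ 0 := by
  rcases hermWeight_eq_one_or ν j with h | h <;> simp [h]

theorem hermWeight_mul_fm_add (ν : ℝ) (j : ℤ) :
    hermWeight ν (j + 2) * fm (j + 1) ν + hermWeight ν j * fm (-(j + 1)) ν = 0 := by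
  rw [hermWeight, hermWeight, stepTwoSeq_add_two, fm_neg_ofReal, signFlip]
  split_ifs <;> push_cast <;> ring

noncomputable def hermForm (ε : ℤˣ) (ν : ℝ) : V ε →ₗ[ℂ] V ε →ₗ⋆[ℂ] ℂ :=
  diagForm fun j : idx ε => hermWeight ν j

theorem hermForm_Hop (ε : ℤˣ) (ν : ℝ) (v w : V ε) :
    hermForm ε ν (Hop ε v) w = hermForm ε ν v (Hop ε w) :=
  (diagForm_shiftOp (hermWeight ν) _ _ neg_zero.symm _ _ 1 (fun j => by simp) v w).trans
    (one_mul _)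

theorem hermForm_PEop (ε : ℤˣ) (ν : ℝ) (v w : V ε) :
    hermForm ε ν (PEop ε ν v) w = -1 * hermForm ε ν v (PFop ε ν w) :=
  diagForm_shiftOp (hermWeight ν) _ _ (by norm_num) _ _ _ (fun j => by
    rw [conj_fm_ofReal, show (1 : ℤ) - (j + 2) = -(j + 1) by ring]
    linear_combination hermWeight_mul_fm_add ν j) v w

theorem hermForm_PFop (ε : ℤˣ) (ν : ℝ) (v w : V ε) :
    hermForm ε ν (PFop ε ν v) w = -1 * hermForm ε ν v (PEop ε ν w) :=
  diagForm_shiftOp (hermWeight ν) _ _ (by norm_num) _ _ _ (fun j => by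
    have h := hermWeight_mul_fm_add ν (j + -2)
    rw [neg_add_cancel_right] at h
    rw [conj_fm_ofReal, show (1 : ℤ) - j = -(j + -2 + 1) by ring]
    linear_combination h) v w

/-- For every `ε ∈ {1,-1}` and every real `ν` (including
`ν ∈ ℤ_{-ε}`), the deformed module `Π(ε,ν)` admits an invariant Hermitian form with
`⟨v_i,v_j⟩ = 0` for `i ≠ j` and `⟨v_j,v_j⟩ = ±1` for all `j`; in particular the form
is nondegenerate. -/
theorem deformed_herm_form_exists (ε : ℤˣ) (ν : ℝ) :
    ∃ Φ : V ε → V ε → ℂ,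
      IsInvHermForm (Hop ε) (PEop ε (ν : ℂ)) (PFop ε (ν : ℂ)) Φ ∧
      (∀ i j : idx ε, i ≠ j → Φ (Finsupp.single i 1) (Finsupp.single j 1) = 0) ∧
      (∀ j : idx ε, Φ (Finsupp.single j 1) (Finsupp.single j 1) = 1 ∨
        Φ (Finsupp.single j 1) (Finsupp.single j 1) = -1) ∧
      (∀ v : V ε, (∀ w : V ε, Φ v w = 0) → v = 0) := by
  refine ⟨fun v w => hermForm ε ν v w, ⟨fun u v w => by rw [map_add, LinearMap.add_apply],
      fun a v w => by rw [map_smul, LinearMap.smul_apply, smul_eq_mul],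
      diagForm_conj_symm fun j => conj_hermWeight ν j, hermForm_Hop ε ν,
      fun v w => by rw [hermForm_PEop]; ring, fun v w => by rw [hermForm_PFop]; ring⟩,
      ?_, ?_, ?_⟩
  · intro i j hij
    simp [hermForm, diagForm_single, Ne.symm hij]
  · intro j
    simpa [hermForm, diagForm_single] using hermWeight_eq_one_or ν j
  · exact fun v => eq_zero_of_diagForm_eq_zero fun j : idx ε => hermWeight_ne_zero ν j

end SL2Deform
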